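/- arXiv:2406.17226 — 4 statements merged into one kernel-verified Lean document; each statement's English description precedes it below -/
import Mathlib

section
/- Consider block variables x = (x₁,…,x_s) with x_i ∈ ℝ^{n_i} and y = (y₁,…,y_t) with y_j ∈ ℝ^{m_j}. Let F : ℝ^{n₁}×⋯×ℝ^{n_s} → ℝ and G : ℝ^{m₁}×⋯×ℝ^{m_t} → ℝ be differentiable, and let H be a proper function of (x, y) with values in ℝ ∪ {+∞}. Fix an index i, a point (x, y), already-updated prefix blocks x'_{<i} = (x'₁,…,x'_{i−1}), and τ_i > 0; suppose the map t ↦ ∇_{x_i}F(x'_{<i}, t, x_{>i}) is Lipschitz with constant μ_i. If x_i⁺ is a minimizer over ℝ^{n_i} of t ↦ H(x'_{<i}, t, x_{>i}, y) + ⟨t − x_i, ∇_{x_i}F(x'_{<i}, x_i, x_{>i})⟩ + (τ_i/2)‖t − x_i‖², then H(x'_{<i}, x_i⁺, x_{>i}, y) + F(x'_{<i}, x_i⁺, x_{>i}) ≤ H(x'_{<i}, x_i, x_{>i}, y) + F(x'_{<i}, x_i, x_{>i}) − ((τ_i − μ_i)/2)‖x_i⁺ − x_i‖². Analogously, fix an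 index j, a point (x, y), prefix blocks y'_{<j}, and σ_j > 0 with t ↦ ∇_{y_j}G(y'_{<j}, t, y_{>j}) Lipschitz with constant ν_j. If y_j⁺ minimizes t ↦ H(x, y'_{<j}, t, y_{>j}) + ⟨t − y_j, ∇_{y_j}G(y'_{<j}, y_j, y_{>j})⟩ + (σ_j/2)‖t − y_j‖², then H(x, y'_{<j}, y_j⁺, y_{>j}) + G(y'_{<j}, y_j⁺, y_{>j}) ≤ H(x, y'_{<j}, y_j, y_{>j}) + G(y'_{<j}, y_j, y_{>j}) − ((σ_j − ν_j)/2)‖y_j⁺ − y_j‖². -/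
/-!
Comparing the proximal minimizer `z⁺` with the unchanged block `z` gives
`H(z⁺) + ⟪z⁺ - z, ∇F(z)⟫ + τ/2 ‖z⁺ - z‖² ≤ H(z)`, while the descent lemma for the
`μ`-Lipschitz partial gradient gives `F(z⁺) ≤ F(z) + ⟪z⁺ - z, ∇F(z)⟫ + μ/2 ‖z⁺ - z‖²`.
Adding the two yields the decrease by `(τ - μ)/2 ‖z⁺ - z‖²`. The descent lemma itself follows
because `t ↦ F(z + t(z⁺ - z)) - t⟪z⁺ - z, ∇F(z)⟫ - μt²/2 ‖z⁺ - z‖²` is antitone on `t ≥ 0`.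
-/

open scoped RealInnerProductSpace

section DescentLemma

variable {E : Type*} [NormedAddCommGroup E] [InnerProductSpace ℝ E] [CompleteSpace E]

theorem HasGradientAt.hasDerivAt_comp_add_smul {f : E → ℝ} {g u h : E} {t : ℝ}
    (hf : HasGradientAt f g (u + t • h)) :
    HasDerivAt (fun s : ℝ => f (u + s • h)) ⟪g, h⟫ t := by
  have hline : HasDerivAt (fun s : ℝ => u + s • h) h t := by
    simpa using ((hasDerivAt_id t).smul_const h).const_add u
  have hcomp := hf.hasFDerivAt.comp_hasDerivAt t hline
  simp only [InnerProductSpace.toDual_apply_apply] at hcomp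
  exact hcomp

theorem le_add_inner_add_sq_of_gradient_lipschitz_at {f : E → ℝ} {g : E → E} {μ : ℝ} {u : E}
    (hf : ∀ w, HasGradientAt f (g w) w) (hg : ∀ w, ‖g w - g u‖ ≤ μ * ‖w - u‖) (v : E) :
    f v ≤ f u + ⟪v - u, g u⟫ + μ / 2 * ‖v - u‖ ^ 2 := by
  set h := v - u
  set ψ : ℝ → ℝ := fun t => f (u + t • h) - t * ⟪h, g u⟫ - μ / 2 * t ^ 2 * ‖h‖ ^ 2
  have hψ : ∀ t, HasDerivAt ψ (⟪g (u + t • h) - g u, h⟫ - μ * t * ‖h‖ ^ 2) t := by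
    intro t
    have hlin : HasDerivAt (fun s : ℝ => s * ⟪h, g u⟫) ⟪h, g u⟫ t := by
      simpa using (hasDerivAt_id t).mul_const ⟪h, g u⟫
    have hquad : HasDerivAt (fun s : ℝ => μ / 2 * s ^ 2 * ‖h‖ ^ 2) (μ * t * ‖h‖ ^ 2) t := by
      have hsq : HasDerivAt (fun s : ℝ => s ^ 2) (2 * t) t := by simpa using hasDerivAt_pow 2 t
      exact ((hsq.const_mul (μ / 2)).mul_const (‖h‖ ^ 2)).congr_deriv (by ring)
    refine (((hf _).hasDerivAt_comp_add_smul.sub hlin).sub hquad).congr_deriv ?_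
    rw [inner_sub_left (g (u + t • h)), real_inner_comm (g u) h]
  have hψ_anti : AntitoneOn ψ (Set.Ici 0) := by
    refine antitoneOn_of_hasDerivWithinAt_nonpos (convex_Ici 0)
      (fun t _ => (hψ t).continuousAt.continuousWithinAt) (fun t _ => (hψ t).hasDerivWithinAt) ?_
    intro t ht
    rw [interior_Ici, Set.mem_Ioi] at ht
    have hlip : ⟪g (u + t • h) - g u, h⟫ ≤ μ * t * ‖h‖ ^ 2 :=
      calc ⟪g (u + t • h) - g u, h⟫ ≤ ‖g (u + t • h) - g u‖ * ‖h‖ := real_inner_le_norm _ _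
        _ ≤ μ * ‖(u + t • h) - u‖ * ‖h‖ := by gcongr; exact hg _
        _ = μ * t * ‖h‖ ^ 2 := by
          rw [add_sub_cancel_left, norm_smul, Real.norm_of_nonneg ht.le]; ring
    linarith
  have h01 : ψ 1 ≤ ψ 0 := hψ_anti Set.self_mem_Ici (zero_le_one' ℝ) zero_le_one
  simp only [ψ, one_smul, zero_smul, add_zero, add_sub_cancel, h] at h01
  linarith

theorem sufficient_decrease_of_isMin_prox_linearized (φ : E → EReal) {f : E → ℝ} {g : E → E}
    {μ τ : ℝ} {z z' : E} (hf : ∀ w, HasGradientAt f (g w) w)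
    (hg : ∀ w, ‖g w - g z‖ ≤ μ * ‖w - z‖)
    (hmin : ∀ u, φ z' + ((⟪z' - z, g z⟫ + τ / 2 * ‖z' - z‖ ^ 2 : ℝ) : EReal)
      ≤ φ u + ((⟪u - z, g z⟫ + τ / 2 * ‖u - z‖ ^ 2 : ℝ) : EReal)) :
    φ z' + (f z' : EReal) ≤ φ z + ((f z - (τ - μ) / 2 * ‖z' - z‖ ^ 2 : ℝ) : EReal) := by
  have hprox := hmin z
  simp only [sub_self, inner_zero_left, norm_zero, add_zero, ne_eq, OfNat.ofNat_ne_zero,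
    not_false_eq_true, zero_pow, mul_zero, EReal.coe_zero] at hprox
  have hdescent := le_add_inner_add_sq_of_gradient_lipschitz_at hf hg z'
  calc φ z' + (f z' : EReal)
      ≤ φ z' + ((⟪z' - z, g z⟫ + τ / 2 * ‖z' - z‖ ^ 2 +
          (f z - (τ - μ) / 2 * ‖z' - z‖ ^ 2) : ℝ) : EReal) :=
        add_le_add_right (EReal.coe_le_coe_iff.2 (by linarith)) _
    _ = φ z' + ((⟪z' - z, g z⟫ + τ / 2 * ‖z' - z‖ ^ 2 : ℝ) : EReal) +
          ((f z - (τ - μ) / 2 * ‖z' - z‖ ^ 2 : ℝ) : EReal) := by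
        rw [EReal.coe_add, add_assoc]
    _ ≤ φ z + ((f z - (τ - μ) / 2 * ‖z' - z‖ ^ 2 : ℝ) : EReal) := by gcongr

end DescentLemma

theorem stmt_4_general {s t : ℕ} (n : Fin s → ℕ) (m : Fin t → ℕ)
    (F : ((l : Fin s) → EuclideanSpace ℝ (Fin (n l))) → ℝ)
    (G : ((l : Fin t) → EuclideanSpace ℝ (Fin (m l))) → ℝ)
    (H : ((l : Fin s) → EuclideanSpace ℝ (Fin (n l))) →
         ((l : Fin t) → EuclideanSpace ℝ (Fin (m l))) → EReal)
    (x x' : (l : Fin s) → EuclideanSpace ℝ (Fin (n l)))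
    (y y' : (l : Fin t) → EuclideanSpace ℝ (Fin (m l)))
    (i : Fin s) (j : Fin t)
    (τi σj μi νj : ℝ)
    -- the base points with already-updated prefix blocks
    (bx : (l : Fin s) → EuclideanSpace ℝ (Fin (n l)))
    (hbx : bx = fun l => if l < i then x' l else x l)
    (cy : (l : Fin t) → EuclideanSpace ℝ (Fin (m l)))
    (hcy : cy = fun l => if l < j then y' l else y l)
    -- partial gradients of F and G in the i-th (resp. j-th) block
    (gFi : EuclideanSpace ℝ (Fin (n i)) → EuclideanSpace ℝ (Fin (n i)))
    (gGj : EuclideanSpace ℝ (Fin (m j)) → EuclideanSpace ℝ (Fin (m j)))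
    (hgF : ∀ u, HasGradientAt (fun v => F (Function.update bx i v)) (gFi u) u)
    (hgFlip : ∀ u v, ‖gFi u - gFi v‖ ≤ μi * ‖u - v‖)
    (hgG : ∀ u, HasGradientAt (fun v => G (Function.update cy j v)) (gGj u) u)
    (hgGlip : ∀ u v, ‖gGj u - gGj v‖ ≤ νj * ‖u - v‖)
    (xiplus : EuclideanSpace ℝ (Fin (n i)))
    (yjplus : EuclideanSpace ℝ (Fin (m j)))
    (hxmin : ∀ u, H (Function.update bx i xiplus) y
        + ((⟪xiplus - x i, gFi (x i)⟫ + τi / 2 * ‖xiplus - x i‖ ^ 2 : ℝ) : EReal)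
      ≤ H (Function.update bx i u) y
        + ((⟪u - x i, gFi (x i)⟫ + τi / 2 * ‖u - x i‖ ^ 2 : ℝ) : EReal))
    (hymin : ∀ u, H x (Function.update cy j yjplus)
        + ((⟪yjplus - y j, gGj (y j)⟫ + σj / 2 * ‖yjplus - y j‖ ^ 2 : ℝ) : EReal)
      ≤ H x (Function.update cy j u)
        + ((⟪u - y j, gGj (y j)⟫ + σj / 2 * ‖u - y j‖ ^ 2 : ℝ) : EReal)) :
    (H (Function.update bx i xiplus) y + ((F (Function.update bx i xiplus) : ℝ) : EReal)
      ≤ H bx y + ((F bx - (τi - μi) / 2 * ‖xiplus - x i‖ ^ 2 : ℝ) : EReal))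
    ∧ (H x (Function.update cy j yjplus) + ((G (Function.update cy j yjplus) : ℝ) : EReal)
      ≤ H x cy + ((G cy - (σj - νj) / 2 * ‖yjplus - y j‖ ^ 2 : ℝ) : EReal)) := by
  have hbx_i : Function.update bx i (x i) = bx := by
    rw [Function.update_eq_self_iff, hbx]; simp
  have hcy_j : Function.update cy j (y j) = cy := by
    rw [Function.update_eq_self_iff, hcy]; simp
  have hx := sufficient_decrease_of_isMin_prox_linearized (fun v => H (Function.update bx i v) y)
    hgF (fun w => hgFlip w (x i)) hxmin
  have hy := sufficient_decrease_of_isMin_prox_linearized (fun v => H x (Function.update cy j v))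
    hgG (fun w => hgGlip w (y j)) hymin
  rw [hbx_i] at hx
  rw [hcy_j] at hy
  exact ⟨hx, hy⟩

/-- Per-block descent inequalities of the eASAP algorithm: one proximal
step on `H` with a linearization of `F` (resp. `G`) on the `i`-th `x`-block (resp. the
`j`-th `y`-block), with already-updated prefix blocks. -/
theorem stmt_4 {s t : ℕ} (n : Fin s → ℕ) (m : Fin t → ℕ)
    (F : ((l : Fin s) → EuclideanSpace ℝ (Fin (n l))) → ℝ)
    (G : ((l : Fin t) → EuclideanSpace ℝ (Fin (m l))) → ℝ)
    (H : ((l : Fin s) → EuclideanSpace ℝ (Fin (n l))) →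
         ((l : Fin t) → EuclideanSpace ℝ (Fin (m l))) → EReal)
    (hHproper : ∃ p q, H p q ≠ ⊤) (hHnobot : ∀ p q, H p q ≠ ⊥)
    (x x' : (l : Fin s) → EuclideanSpace ℝ (Fin (n l)))
    (y y' : (l : Fin t) → EuclideanSpace ℝ (Fin (m l)))
    (i : Fin s) (j : Fin t)
    (τi σj μi νj : ℝ) (hτi : 0 < τi) (hσj : 0 < σj)
    -- the base points with already-updated prefix blocks
    (bx : (l : Fin s) → EuclideanSpace ℝ (Fin (n l)))
    (hbx : bx = fun l => if l < i then x' l else x l)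
    (cy : (l : Fin t) → EuclideanSpace ℝ (Fin (m l)))
    (hcy : cy = fun l => if l < j then y' l else y l)
    -- partial gradients of F and G in the i-th (resp. j-th) block
    (gFi : EuclideanSpace ℝ (Fin (n i)) → EuclideanSpace ℝ (Fin (n i)))
    (gGj : EuclideanSpace ℝ (Fin (m j)) → EuclideanSpace ℝ (Fin (m j)))
    (hgF : ∀ u, HasGradientAt (fun v => F (Function.update bx i v)) (gFi u) u)
    (hgFlip : ∀ u v, ‖gFi u - gFi v‖ ≤ μi * ‖u - v‖)
    (hgG : ∀ u, HasGradientAt (fun v => G (Function.update cy j v)) (gGj u) u)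
    (hgGlip : ∀ u v, ‖gGj u - gGj v‖ ≤ νj * ‖u - v‖)
    (xiplus : EuclideanSpace ℝ (Fin (n i)))
    (yjplus : EuclideanSpace ℝ (Fin (m j)))
    (hxmin : ∀ u, H (Function.update bx i xiplus) y
        + ((⟪xiplus - x i, gFi (x i)⟫ + τi / 2 * ‖xiplus - x i‖ ^ 2 : ℝ) : EReal)
      ≤ H (Function.update bx i u) y
        + ((⟪u - x i, gFi (x i)⟫ + τi / 2 * ‖u - x i‖ ^ 2 : ℝ) : EReal))
    (hymin : ∀ u, H x (Function.update cy j yjplus)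
        + ((⟪yjplus - y j, gGj (y j)⟫ + σj / 2 * ‖yjplus - y j‖ ^ 2 : ℝ) : EReal)
      ≤ H x (Function.update cy j u)
        + ((⟪u - y j, gGj (y j)⟫ + σj / 2 * ‖u - y j‖ ^ 2 : ℝ) : EReal)) :
    (H (Function.update bx i xiplus) y + ((F (Function.update bx i xiplus) : ℝ) : EReal)
      ≤ H bx y + ((F bx - (τi - μi) / 2 * ‖xiplus - x i‖ ^ 2 : ℝ) : EReal))
    ∧ (H x (Function.update cy j yjplus) + ((G (Function.update cy j yjplus) : ℝ) : EReal)
      ≤ H x cy + ((G cy - (σj - νj) / 2 * ‖yjplus - y j‖ ^ 2 : ℝ) : EReal)) :=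
  stmt_4_general n m F G H x x' y y' i j τi σj μi νj bx hbx cy hcy gFi gGj hgF hgFlip hgG hgGlip
    xiplus yjplus hxmin hymin
end

section
/- Consider block variables x = (x₁,…,x_s), x_i ∈ ℝ^{n_i}, and y = (y₁,…,y_t), y_j ∈ ℝ^{m_j}, let F, G be differentiable on the respective product spaces, let H be a proper function of (x, y) with values in ℝ ∪ {+∞}, and set J(x, y) = F(x) + G(y) + H(x, y). Fix a current iterate z^k = (x^k, y^k) and suppose the next iterate z^{k+1} = (x^{k+1}, y^{k+1}) is produced cyclically: for each i = 1,…,s, x_i^{k+1} is a minimizer of x_i ↦ H(x^{k+1}_{<i}, x_i, x^k_{>i}, y^k) + ⟨x_i − x_i^k, ∇_{x_i}F(x^{k+1}_{<i}, x^k_{≥i})⟩ + (τ_i^k/2)‖x_i − x_i^k‖², and then for each j = 1,…,t, y_j^{k+1} is a minimizer of y_j ↦ H(x^{k+1}, y^{k+1}_{<j}, y_j, y^k_{>j}) + ⟨y_j − y_j^k, ∇_{y_j}G(y^{k+1}_{<j}, y^k_{≥j})⟩ + (σ_j^k/2)‖y_j − y_j^k‖². Assume that t ↦ ∇_{x_i}F(x^{k+1}_{<i},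 t, x^k_{>i}) is Lipschitz with constant μ_i^k and that t ↦ ∇_{y_j}G(y^{k+1}_{<j}, t, y^k_{>j}) is Lipschitz with constant ν_j^k, that μ_i^k ≥ μ̲_i > 0 and ν_j^k ≥ ν̲_j > 0, and that the stepsizes satisfy τ_i^k = γ_i μ_i^k with γ_i > 1 and σ_j^k = γ'_j ν_j^k with γ'_j > 1. Then J(z^{k+1}) ≤ J(z^k) − c‖z^{k+1} − z^k‖², where c = (1/2)·min{(γ_i − 1)μ̲_i, (γ'_j − 1)ν̲_j : i = 1,…,s, j = 1,…,t} > 0. -/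
/-!
Each block update is a proximal-linearized step. Testing the block subproblem with the old block
`x_i^k` and bounding `F` along the block by the descent lemma (a gradient that is `μ_i`-Lipschitz
gives a quadratic upper bound with curvature `μ_i`) shows that `H + F` drops by at least
`(τ_i - μ_i)/2 ‖x_i^{k+1} - x_i^k‖²`. Telescoping over the `x`-sweep and then the `y`-sweep and
bounding `(τ_i - μ_i)/2 = (γ_i - 1) μ_i / 2` below by `c` gives the claim. Since `H` takes values
in `EReal`, only real quantities are ever moved across an inequality.
-/

open scoped RealInnerProductSpace

theorem le_add_inner_add_sq_of_lipschitz_gradient {E : Type*} [NormedAddCommGroup E]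
    [InnerProductSpace ℝ E] [CompleteSpace E] {f : E → ℝ} {g : E → E} {L : ℝ}
    (hg : ∀ u, HasGradientAt f (g u) u) (hlip : ∀ u v, ‖g u - g v‖ ≤ L * ‖u - v‖) (a b : E) :
    f b ≤ f a + ⟪b - a, g a⟫ + L / 2 * ‖b - a‖ ^ 2 := by
  set d := b - a
  let ψ : ℝ → ℝ := fun t => f (a + t • d) - t * ⟪d, g a⟫ - L / 2 * t ^ 2 * ‖d‖ ^ 2
  have hψ : ∀ t, HasDerivAt ψ (⟪d, g (a + t • d) - g a⟫ - L * t * ‖d‖ ^ 2) t := by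
    intro t
    have hline : HasDerivAt (fun t : ℝ => a + t • d) d t := by
      simpa using ((hasDerivAt_id t).smul_const d).const_add a
    have hf : HasDerivAt (fun t : ℝ => f (a + t • d)) ⟪d, g (a + t • d)⟫ t := by
      simpa [real_inner_comm, Function.comp_def] using
        (hg (a + t • d)).hasFDerivAt.comp_hasDerivAt t hline
    refine ((hf.sub ((hasDerivAt_id t).mul_const ⟪d, g a⟫)).sub
      (((hasDerivAt_pow 2 t).const_mul (L / 2)).mul_const (‖d‖ ^ 2))).congr_deriv ?_
    simp only [inner_sub_right, Nat.cast_ofNat, Nat.add_one_sub_one, pow_one]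
    ring
  have hψ_anti : AntitoneOn ψ (Set.Ici 0) := by
    refine antitoneOn_of_hasDerivWithinAt_nonpos (convex_Ici 0)
      (fun t _ => (hψ t).continuousAt.continuousWithinAt) (fun t _ => (hψ t).hasDerivWithinAt)
      fun t ht => sub_nonpos.2 ?_
    rw [interior_Ici, Set.mem_Ioi] at ht
    calc ⟪d, g (a + t • d) - g a⟫ ≤ ‖d‖ * ‖g (a + t • d) - g a‖ := real_inner_le_norm _ _
      _ ≤ ‖d‖ * (L * ‖t • d‖) := by gcongr; simpa using hlip (a + t • d) a
      _ = L * t * ‖d‖ ^ 2 := by rw [norm_smul, Real.norm_of_nonneg ht.le]; ring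
  have hψ_one_le_zero : ψ 1 ≤ ψ 0 := hψ_anti Set.self_mem_Ici (Set.mem_Ici.2 zero_le_one) zero_le_one
  simp only [ψ, one_smul, d, add_sub_cancel, zero_smul, add_zero] at hψ_one_le_zero
  linarith

theorem EReal.add_coe_le_add_coe_of_sub_le {a b : EReal} {r r' u u' : ℝ}
    (h : a + r ≤ b + r') (hu : u - r ≤ u' - r') : a + u ≤ b + u' := by
  calc a + u = a + r + (u - r : ℝ) := by rw [add_assoc, ← EReal.coe_add, add_sub_cancel]
    _ ≤ b + r' + (u' - r' : ℝ) := add_le_add h (EReal.coe_le_coe_iff.2 hu)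
    _ = b + u' := by rw [add_assoc, ← EReal.coe_add, add_sub_cancel]

theorem EReal.add_coe_telescope_le {N : ℕ} (V : ℕ → EReal) (R : ℕ → ℝ) (e : Fin N → ℝ)
    (h : ∀ i : Fin N, V (i + 1) + ((R (i + 1) + e i : ℝ) : EReal) ≤ V i + (R i : EReal)) :
    V N + ((R N + ∑ i, e i : ℝ) : EReal) ≤ V 0 + (R 0 : EReal) := by
  induction N with
  | zero => simp
  | succ N ih =>
    refine le_trans ?_ (ih (e ∘ Fin.castSucc) fun i => h i.castSucc)
    rw [Fin.sum_univ_castSucc]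
    refine EReal.add_coe_le_add_coe_of_sub_le (h (Fin.last N)) ?_
    simp only [Fin.val_last, Function.comp_apply]
    linarith

theorem proxLinear_step_sufficient_decrease {E : Type*} [NormedAddCommGroup E]
    [InnerProductSpace ℝ E] [CompleteSpace E] {φ : E → EReal} {f : E → ℝ} {g : E → E}
    {L τ : ℝ} (hg : ∀ u, HasGradientAt f (g u) u) (hlip : ∀ u v, ‖g u - g v‖ ≤ L * ‖u - v‖)
    {a b : E} (hmin : φ b + ((⟪b - a, g a⟫ + τ / 2 * ‖b - a‖ ^ 2 : ℝ) : EReal) ≤ φ a) :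
    φ b + ((f b + (τ - L) / 2 * ‖b - a‖ ^ 2 : ℝ) : EReal) ≤ φ a + (f a : EReal) :=
  EReal.add_coe_le_add_coe_of_sub_le (r := ⟪b - a, g a⟫ + τ / 2 * ‖b - a‖ ^ 2) (r' := 0)
    (by rwa [EReal.coe_zero, add_zero])
    (by linarith [le_add_inner_add_sq_of_lipschitz_gradient hg hlip a b])

theorem blockSweep_sufficient_decrease {N : ℕ} {E : Fin N → Type*}
    [∀ i, NormedAddCommGroup (E i)] [∀ i, InnerProductSpace ℝ (E i)] [∀ i, CompleteSpace (E i)]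
    (F : (∀ l, E l) → ℝ) (Φ : (∀ l, E l) → EReal) (x x' : ∀ l, E l)
    (v : Fin N → ∀ l, E l) (hv : ∀ i l, v i l = if l < i then x' l else x l)
    (L τ : Fin N → ℝ) (g : ∀ i, E i → E i)
    (hg : ∀ i u, HasGradientAt (fun w => F (Function.update (v i) i w)) (g i u) u)
    (hlip : ∀ i u w, ‖g i u - g i w‖ ≤ L i * ‖u - w‖)
    (hmin : ∀ i u, Φ (Function.update (v i) i (x' i))
        + ((⟪x' i - x i, g i (x i)⟫ + τ i / 2 * ‖x' i - x i‖ ^ 2 : ℝ) : EReal)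
      ≤ Φ (Function.update (v i) i u)
        + ((⟪u - x i, g i (x i)⟫ + τ i / 2 * ‖u - x i‖ ^ 2 : ℝ) : EReal)) :
    Φ x' + ((F x' + ∑ i, (τ i - L i) / 2 * ‖x' i - x i‖ ^ 2 : ℝ) : EReal)
      ≤ Φ x + (F x : EReal) := by
  let w : ℕ → ∀ l, E l := fun k l => if (l : ℕ) < k then x' l else x l
  have hw : ∀ i : Fin N, w i = v i := fun i => funext fun l => by simp [w, hv]
  have hw_succ : ∀ i : Fin N, w (i + 1) = Function.update (v i) i (x' i) := by
    intro i
    funext l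
    rcases eq_or_ne l i with rfl | hl
    · simp [w]
    · simp [w, hv, Function.update_of_ne hl, hl.le_iff_lt]
  have hv_self : ∀ i, Function.update (v i) i (x i) = v i := fun i => by simp [hv]
  have hsweep := EReal.add_coe_telescope_le (fun k => Φ (w k)) (fun k => F (w k))
    (fun i => (τ i - L i) / 2 * ‖x' i - x i‖ ^ 2) fun i => by
      have hstep := proxLinear_step_sufficient_decrease
        (φ := fun u => Φ (Function.update (v i) i u)) (a := x i) (b := x' i) (τ := τ i)
        (hg i) (hlip i) (by simpa [hv_self] using hmin i (x i))
      simpa only [hw, hw_succ, hv_self] using hstep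
  have hw_zero : w 0 = x := funext fun l => by simp [w]
  have hw_N : w N = x' := funext fun l => by simp [w]
  simpa only [hw_zero, hw_N] using hsweep

theorem half_min_ciInf_le_left {ι κ : Type*} [Finite ι] (a : ι → ℝ) (b : κ → ℝ) (i : ι) :
    (1 / 2 : ℝ) * min (⨅ i, a i) (⨅ j, b j) ≤ a i / 2 := by
  linarith [min_le_left (⨅ i, a i) (⨅ j, b j), ciInf_le (Finite.bddBelow_range a) i]

theorem half_min_ciInf_le_right {ι κ : Type*} [Finite κ] (a : ι → ℝ) (b : κ → ℝ) (j : κ) :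
    (1 / 2 : ℝ) * min (⨅ i, a i) (⨅ j, b j) ≤ b j / 2 := by
  linarith [min_le_right (⨅ i, a i) (⨅ j, b j), ciInf_le (Finite.bddBelow_range b) j]

theorem ciInf_pos_of_finite {ι : Type*} [Finite ι] [Nonempty ι] {a : ι → ℝ}
    (ha : ∀ i, 0 < a i) : 0 < ⨅ i, a i := by
  obtain ⟨i, hi⟩ := exists_eq_ciInf_of_finite (f := a)
  exact hi ▸ ha i

theorem mul_sum_sq_le_sum_stepsize_gap_mul_sq {ι : Type*} (s : Finset ι) {c : ℝ}
    {γ μlow μ τ r : ι → ℝ} (hc : ∀ i, c ≤ (γ i - 1) * μlow i / 2) (hγ : ∀ i, 1 < γ i)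
    (hμ : ∀ i, μlow i ≤ μ i) (hτ : ∀ i, τ i = γ i * μ i) :
    c * ∑ i ∈ s, r i ^ 2 ≤ ∑ i ∈ s, (τ i - μ i) / 2 * r i ^ 2 := by
  rw [Finset.mul_sum]
  gcongr with i
  have := mul_le_mul_of_nonneg_left (hμ i) (sub_pos.2 (hγ i)).le
  linarith [hc i, hτ i]

theorem stmt_5_general {s t : ℕ} (n : Fin (s + 1) → ℕ) (m : Fin (t + 1) → ℕ)
    (F : ((l : Fin (s + 1)) → EuclideanSpace ℝ (Fin (n l))) → ℝ)
    (G : ((l : Fin (t + 1)) → EuclideanSpace ℝ (Fin (m l))) → ℝ)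
    (H : ((l : Fin (s + 1)) → EuclideanSpace ℝ (Fin (n l))) →
         ((l : Fin (t + 1)) → EuclideanSpace ℝ (Fin (m l))) → EReal)
    -- current and next iterates
    (xk xk1 : (l : Fin (s + 1)) → EuclideanSpace ℝ (Fin (n l)))
    (yk yk1 : (l : Fin (t + 1)) → EuclideanSpace ℝ (Fin (m l)))
    -- intermediate points: prefix already updated, i-th and later blocks still old
    (vx : (i : Fin (s + 1)) → (l : Fin (s + 1)) → EuclideanSpace ℝ (Fin (n l)))
    (hvx : ∀ i l, vx i l = if l < i then xk1 l else xk l)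
    (vy : (j : Fin (t + 1)) → (l : Fin (t + 1)) → EuclideanSpace ℝ (Fin (m l)))
    (hvy : ∀ j l, vy j l = if l < j then yk1 l else yk l)
    -- Lipschitz moduli, lower bounds and stepsize factors
    (μ μlow γ τ : Fin (s + 1) → ℝ) (ν νlow γ' σ : Fin (t + 1) → ℝ)
    (hμlow : ∀ i, 0 < μlow i) (hμ : ∀ i, μlow i ≤ μ i)
    (hνlow : ∀ j, 0 < νlow j) (hν : ∀ j, νlow j ≤ ν j)
    (hγ : ∀ i, 1 < γ i) (hγ' : ∀ j, 1 < γ' j)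
    (hτ : ∀ i, τ i = γ i * μ i) (hσ : ∀ j, σ j = γ' j * ν j)
    -- partial gradients of F and G and their blockwise Lipschitz continuity
    (gF : (i : Fin (s + 1)) → EuclideanSpace ℝ (Fin (n i)) → EuclideanSpace ℝ (Fin (n i)))
    (gG : (j : Fin (t + 1)) → EuclideanSpace ℝ (Fin (m j)) → EuclideanSpace ℝ (Fin (m j)))
    (hgF : ∀ i u, HasGradientAt (fun v => F (Function.update (vx i) i v)) (gF i u) u)
    (hgFlip : ∀ i u v, ‖gF i u - gF i v‖ ≤ μ i * ‖u - v‖)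
    (hgG : ∀ j u, HasGradientAt (fun v => G (Function.update (vy j) j v)) (gG j u) u)
    (hgGlip : ∀ j u v, ‖gG j u - gG j v‖ ≤ ν j * ‖u - v‖)
    -- the cyclic blockwise minimization steps
    (hxmin : ∀ i, ∀ u, H (Function.update (vx i) i (xk1 i)) yk
        + ((⟪xk1 i - xk i, gF i (xk i)⟫ + τ i / 2 * ‖xk1 i - xk i‖ ^ 2 : ℝ) : EReal)
      ≤ H (Function.update (vx i) i u) yk
        + ((⟪u - xk i, gF i (xk i)⟫ + τ i / 2 * ‖u - xk i‖ ^ 2 : ℝ) : EReal))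
    (hymin : ∀ j, ∀ u, H xk1 (Function.update (vy j) j (yk1 j))
        + ((⟪yk1 j - yk j, gG j (yk j)⟫ + σ j / 2 * ‖yk1 j - yk j‖ ^ 2 : ℝ) : EReal)
      ≤ H xk1 (Function.update (vy j) j u)
        + ((⟪u - yk j, gG j (yk j)⟫ + σ j / 2 * ‖u - yk j‖ ^ 2 : ℝ) : EReal)) :
    0 < (1 / 2 : ℝ) * min (⨅ i, (γ i - 1) * μlow i) (⨅ j, (γ' j - 1) * νlow j)
    ∧ H xk1 yk1 + ((F xk1 + G yk1 : ℝ) : EReal)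
      ≤ H xk yk + ((F xk + G yk : ℝ) : EReal)
        - (((1 / 2 : ℝ) * min (⨅ i, (γ i - 1) * μlow i) (⨅ j, (γ' j - 1) * νlow j)
            * (∑ i, ‖xk1 i - xk i‖ ^ 2 + ∑ j, ‖yk1 j - yk j‖ ^ 2) : ℝ) : EReal) := by
  set c := (1 / 2 : ℝ) * min (⨅ i, (γ i - 1) * μlow i) (⨅ j, (γ' j - 1) * νlow j)
  have hc_pos : 0 < c := mul_pos one_half_pos <| lt_min
    (ciInf_pos_of_finite fun i => mul_pos (sub_pos.2 (hγ i)) (hμlow i))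
    (ciInf_pos_of_finite fun j => mul_pos (sub_pos.2 (hγ' j)) (hνlow j))
  refine ⟨hc_pos, ?_⟩
  have hX := blockSweep_sufficient_decrease F (H · yk) xk xk1 vx hvx μ τ gF hgF hgFlip hxmin
  have hY := blockSweep_sufficient_decrease G (H xk1 ·) yk yk1 vy hvy ν σ gG hgG hgGlip hymin
  have hSx : c * ∑ i, ‖xk1 i - xk i‖ ^ 2 ≤ ∑ i, (τ i - μ i) / 2 * ‖xk1 i - xk i‖ ^ 2 :=
    mul_sum_sq_le_sum_stepsize_gap_mul_sq _
      (fun i => half_min_ciInf_le_left _ (fun j => (γ' j - 1) * νlow j) i) hγ hμ hτ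
  have hSy : c * ∑ j, ‖yk1 j - yk j‖ ^ 2 ≤ ∑ j, (σ j - ν j) / 2 * ‖yk1 j - yk j‖ ^ 2 :=
    mul_sum_sq_le_sum_stepsize_gap_mul_sq _
      (fun j => half_min_ciInf_le_right (fun i => (γ i - 1) * μlow i) _ j) hγ' hν hσ
  rw [add_sub_assoc, ← EReal.coe_sub]
  calc H xk1 yk1 + ((F xk1 + G yk1 : ℝ) : EReal)
      ≤ H xk1 yk + ((F xk1 + G yk - ∑ j, (σ j - ν j) / 2 * ‖yk1 j - yk j‖ ^ 2 : ℝ) : EReal) :=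
        EReal.add_coe_le_add_coe_of_sub_le hY (by linarith)
    _ ≤ H xk yk + ((F xk + G yk - ∑ i, (τ i - μ i) / 2 * ‖xk1 i - xk i‖ ^ 2
          - ∑ j, (σ j - ν j) / 2 * ‖yk1 j - yk j‖ ^ 2 : ℝ) : EReal) :=
        EReal.add_coe_le_add_coe_of_sub_le hX (by linarith)
    _ ≤ _ := by
      refine add_le_add le_rfl (EReal.coe_le_coe_iff.2 ?_)
      rw [mul_add]
      linarith

/-- One-iteration sufficient decrease of the eASAP algorithm: with
`J(x,y) = F x + G y + H x y`, cyclic blockwise proximal-linearized updates, blockwise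
Lipschitz partial gradients and stepsizes `τ_i = γ_i μ_i` (`γ_i > 1`),
`σ_j = γ'_j ν_j` (`γ'_j > 1`), one has `J z^{k+1} ≤ J z^k − c ‖z^{k+1} − z^k‖²` with
`c = ½ min{(γ_i−1)μ̲_i, (γ'_j−1)ν̲_j} > 0`.  Blocks are indexed by `Fin (s+1)` and
`Fin (t+1)` (so that there is at least one block of each type). -/
theorem stmt_5 {s t : ℕ} (n : Fin (s + 1) → ℕ) (m : Fin (t + 1) → ℕ)
    (F : ((l : Fin (s + 1)) → EuclideanSpace ℝ (Fin (n l))) → ℝ)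
    (G : ((l : Fin (t + 1)) → EuclideanSpace ℝ (Fin (m l))) → ℝ)
    (H : ((l : Fin (s + 1)) → EuclideanSpace ℝ (Fin (n l))) →
         ((l : Fin (t + 1)) → EuclideanSpace ℝ (Fin (m l))) → EReal)
    (hHproper : ∃ p q, H p q ≠ ⊤) (hHnobot : ∀ p q, H p q ≠ ⊥)
    -- current and next iterates
    (xk xk1 : (l : Fin (s + 1)) → EuclideanSpace ℝ (Fin (n l)))
    (yk yk1 : (l : Fin (t + 1)) → EuclideanSpace ℝ (Fin (m l)))
    -- intermediate points: prefix already updated, i-th and later blocks still old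
    (vx : (i : Fin (s + 1)) → (l : Fin (s + 1)) → EuclideanSpace ℝ (Fin (n l)))
    (hvx : ∀ i l, vx i l = if l < i then xk1 l else xk l)
    (vy : (j : Fin (t + 1)) → (l : Fin (t + 1)) → EuclideanSpace ℝ (Fin (m l)))
    (hvy : ∀ j l, vy j l = if l < j then yk1 l else yk l)
    -- Lipschitz moduli, lower bounds and stepsize factors
    (μ μlow γ τ : Fin (s + 1) → ℝ) (ν νlow γ' σ : Fin (t + 1) → ℝ)
    (hμlow : ∀ i, 0 < μlow i) (hμ : ∀ i, μlow i ≤ μ i)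
    (hνlow : ∀ j, 0 < νlow j) (hν : ∀ j, νlow j ≤ ν j)
    (hγ : ∀ i, 1 < γ i) (hγ' : ∀ j, 1 < γ' j)
    (hτ : ∀ i, τ i = γ i * μ i) (hσ : ∀ j, σ j = γ' j * ν j)
    -- partial gradients of F and G and their blockwise Lipschitz continuity
    (gF : (i : Fin (s + 1)) → EuclideanSpace ℝ (Fin (n i)) → EuclideanSpace ℝ (Fin (n i)))
    (gG : (j : Fin (t + 1)) → EuclideanSpace ℝ (Fin (m j)) → EuclideanSpace ℝ (Fin (m j)))
    (hgF : ∀ i u, HasGradientAt (fun v => F (Function.update (vx i) i v)) (gF i u) u)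
    (hgFlip : ∀ i u v, ‖gF i u - gF i v‖ ≤ μ i * ‖u - v‖)
    (hgG : ∀ j u, HasGradientAt (fun v => G (Function.update (vy j) j v)) (gG j u) u)
    (hgGlip : ∀ j u v, ‖gG j u - gG j v‖ ≤ ν j * ‖u - v‖)
    -- the cyclic blockwise minimization steps
    (hxmin : ∀ i, ∀ u, H (Function.update (vx i) i (xk1 i)) yk
        + ((⟪xk1 i - xk i, gF i (xk i)⟫ + τ i / 2 * ‖xk1 i - xk i‖ ^ 2 : ℝ) : EReal)
      ≤ H (Function.update (vx i) i u) yk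
        + ((⟪u - xk i, gF i (xk i)⟫ + τ i / 2 * ‖u - xk i‖ ^ 2 : ℝ) : EReal))
    (hymin : ∀ j, ∀ u, H xk1 (Function.update (vy j) j (yk1 j))
        + ((⟪yk1 j - yk j, gG j (yk j)⟫ + σ j / 2 * ‖yk1 j - yk j‖ ^ 2 : ℝ) : EReal)
      ≤ H xk1 (Function.update (vy j) j u)
        + ((⟪u - yk j, gG j (yk j)⟫ + σ j / 2 * ‖u - yk j‖ ^ 2 : ℝ) : EReal)) :
    0 < (1 / 2 : ℝ) * min (⨅ i, (γ i - 1) * μlow i) (⨅ j, (γ' j - 1) * νlow j)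
    ∧ H xk1 yk1 + ((F xk1 + G yk1 : ℝ) : EReal)
      ≤ H xk yk + ((F xk + G yk : ℝ) : EReal)
        - (((1 / 2 : ℝ) * min (⨅ i, (γ i - 1) * μlow i) (⨅ j, (γ' j - 1) * νlow j)
            * (∑ i, ‖xk1 i - xk i‖ ^ 2 + ∑ j, ‖yk1 j - yk j‖ ^ 2) : ℝ) : EReal) :=
  stmt_5_general n m F G H xk xk1 yk yk1 vx hvx vy hvy μ μlow γ τ ν νlow γ' σ hμlow hμ hνlow hν hγ
    hγ' hτ hσ gF gG hgF hgFlip hgG hgGlip hxmin hymin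
end

section
/- Let (z^k)_{k≥0} be a sequence in ℝ^N, J : ℝ^N → ℝ, J* ∈ ℝ, c > 0, ϱ > 0, η ∈ (0, +∞], and l ∈ ℕ. Let φ : [0, η) → ℝ be continuous and concave with φ(0) = 0, continuously differentiable on (0, η) with φ'(t) > 0 for all t ∈ (0, η). Assume: (a) J(z^{k+1}) ≤ J(z^k) − c‖z^{k+1} − z^k‖² for all k ≥ 0; and (b) for every k ≥ l one has 0 < J(z^k) − J* < η and φ'(J(z^k) − J*) · ϱ ‖z^k − z^{k−1}‖ ≥ 1. Then the sequence has finite length, ∑_{k=0}^{∞} ‖z^{k+1} − z^k‖ < +∞, and consequently (z^k) is a Cauchy sequence and converges to some point z* ∈ ℝ^N. -/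
/-!
Write `r k = J (z k) - J*` and `a k = ‖z (k + 1) - z k‖`. Concavity of `φ` gives the tangent
bound `φ' (r k) * (r k - r (k + 1)) ≤ φ (r k) - φ (r (k + 1))`; chained with sufficient decrease
and the KŁ inequality it yields `a k ^ 2 ≤ a (k - 1) * (ϱ / c) * (φ (r k) - φ (r (k + 1)))`, so
`2 * a k ≤ a (k - 1) + (ϱ / c) * (φ (r k) - φ (r (k + 1)))` by AM–GM. Summing, the `φ`-terms
telescope and `φ (r k) ≥ 0` (the tangent bound between `0` and `r k`), so the partial sums
of `a` are bounded.
-/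

open Finset

lemma ConcaveOn.mul_sub_le_sub_of_hasDerivAt {S : Set ℝ} {φ : ℝ → ℝ} {u v p : ℝ}
    (hφ : ConcaveOn ℝ S φ) (hu : u ∈ S) (hv : v ∈ S) (huv : u ≤ v) (hp : HasDerivAt φ p v) :
    p * (v - u) ≤ φ v - φ u := by
  rcases huv.eq_or_lt with rfl | huv
  · simp
  · have hslope := hφ.le_slope_of_hasDerivAt hu hv huv hp
    rwa [slope_def_field, le_div_iff₀ (sub_pos.2 huv)] at hslope

lemma ConcaveOn.nonneg_of_hasDerivAt {S : Set ℝ} {φ : ℝ → ℝ} {v p : ℝ}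
    (hφ : ConcaveOn ℝ S φ) (h0 : 0 ∈ S) (hφ0 : φ 0 = 0) (hv : v ∈ S) (hv0 : 0 ≤ v)
    (hp : HasDerivAt φ p v) (hp0 : 0 ≤ p) :
    0 ≤ φ v := by
  have htan := hφ.mul_sub_le_sub_of_hasDerivAt h0 hv hv0 hp
  rw [hφ0, sub_zero, sub_zero] at htan
  exact (mul_nonneg hp0 hv0).trans htan

lemma two_mul_le_of_sufficient_decrease_of_kl {a b d D p c ϱ : ℝ} (hc : 0 < c) (hϱ : 0 ≤ ϱ)
    (hb : 0 ≤ b) (hp : 0 < p) (hdec : c * a ^ 2 ≤ d) (htan : p * d ≤ D)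
    (hkl : 1 ≤ p * (ϱ * b)) :
    2 * a ≤ b + ϱ / c * D := by
  have hd : 0 ≤ d := (by positivity : 0 ≤ c * a ^ 2).trans hdec
  have hD : 0 ≤ D := (mul_nonneg hp.le hd).trans htan
  have hsq : c * a ^ 2 ≤ c * (b * (ϱ / c * D)) :=
    calc c * a ^ 2 ≤ d := hdec
      _ ≤ d * (p * (ϱ * b)) := le_mul_of_one_le_right hd hkl
      _ = p * d * (ϱ * b) := by ring
      _ ≤ D * (ϱ * b) := mul_le_mul_of_nonneg_right htan (by positivity)
      _ = c * (b * (ϱ / c * D)) := by field_simp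
  exact two_mul_le_add_of_sq_le_mul hb (by positivity) (le_of_mul_le_mul_left hsq hc)

lemma summable_of_two_mul_succ_le_add_sub {a ψ : ℕ → ℝ} (ha : ∀ k, 0 ≤ a k)
    (hψ : ∀ k, 0 ≤ ψ k) (h : ∀ k, 2 * a (k + 1) ≤ a k + (ψ k - ψ (k + 1))) :
    Summable a := by
  refine summable_of_sum_range_le (c := 2 * a 0 + ψ 0) ha fun n => ?_
  have htel : 2 * ∑ k ∈ range n, a (k + 1) ≤ ∑ k ∈ range n, a k + (ψ 0 - ψ n) := by
    rw [mul_sum, ← sum_range_sub' ψ n, ← sum_add_distrib]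
    exact sum_le_sum fun k _ => h k
  linarith [sum_range_succ' a n, sum_range_succ a n, ha n, hψ n]

theorem stmt_10_general {N : ℕ} (z : ℕ → EuclideanSpace ℝ (Fin N))
    (J : EuclideanSpace ℝ (Fin N) → ℝ) (Jstar : ℝ) (c ϱ : ℝ) (hc : 0 < c) (hϱ : 0 < ϱ)
    (η : EReal) (l : ℕ)
    (φ φ' : ℝ → ℝ)
    (hφ0 : φ 0 = 0)
    (hconc : ConcaveOn ℝ {u : ℝ | 0 ≤ u ∧ (u : EReal) < η} φ)
    (hderiv : ∀ u : ℝ, 0 < u → (u : EReal) < η → HasDerivAt φ (φ' u) u)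
    (hφ'pos : ∀ u : ℝ, 0 < u → (u : EReal) < η → 0 < φ' u)
    -- (a) sufficient decrease
    (hdec : ∀ k, J (z (k + 1)) ≤ J (z k) - c * ‖z (k + 1) - z k‖ ^ 2)
    -- (b) KŁ inequality combined with the relative-error bound
    (hkl : ∀ k, l ≤ k →
      0 < J (z k) - Jstar ∧ ((J (z k) - Jstar : ℝ) : EReal) < η ∧
        1 ≤ φ' (J (z k) - Jstar) * (ϱ * ‖z k - z (k - 1)‖)) :
    Summable (fun k => ‖z (k + 1) - z k‖)
    ∧ CauchySeq z
    ∧ ∃ zstar, Filter.Tendsto z Filter.atTop (nhds zstar) := by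
  set r : ℕ → ℝ := fun k => J (z k) - Jstar
  set a : ℕ → ℝ := fun k => ‖z (k + 1) - z k‖
  have hrS : ∀ k, l ≤ k → 0 ≤ r k ∧ (r k : EReal) < η := fun k hk =>
    ⟨(hkl k hk).1.le, (hkl k hk).2.1⟩
  have hdecr : ∀ k, c * a k ^ 2 ≤ r k - r (k + 1) := fun k => by linarith [hdec k]
  have hφ_nonneg : ∀ k, l ≤ k → 0 ≤ φ (r k) := by
    intro k hk
    obtain ⟨hr, hrη, -⟩ := hkl k hk
    exact hconc.nonneg_of_hasDerivAt ⟨le_rfl, (EReal.coe_lt_coe_iff.2 hr).trans hrη⟩ hφ0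
      (hrS k hk) hr.le (hderiv _ hr hrη) (hφ'pos _ hr hrη).le
  have hstep : ∀ k, l ≤ k →
      2 * a (k + 1) ≤ a k + ϱ / c * (φ (r (k + 1)) - φ (r (k + 2))) := by
    intro k hk
    obtain ⟨hr, hrη, hkl'⟩ := hkl (k + 1) (by omega)
    rw [Nat.add_sub_cancel] at hkl'
    have hmono : r (k + 2) ≤ r (k + 1) :=
      sub_nonneg.1 ((by positivity : 0 ≤ c * a (k + 1) ^ 2).trans (hdecr (k + 1)))
    refine two_mul_le_of_sufficient_decrease_of_kl hc hϱ.le (norm_nonneg _) (hφ'pos _ hr hrη)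
      (hdecr (k + 1)) ?_ hkl'
    exact hconc.mul_sub_le_sub_of_hasDerivAt (hrS _ (by omega)) (hrS _ (by omega)) hmono
      (hderiv _ hr hrη)
  have hsumm : Summable a := by
    refine (summable_nat_add_iff l).1 <| summable_of_two_mul_succ_le_add_sub
      (ψ := fun k => ϱ / c * φ (r (k + l + 1))) (fun _ => norm_nonneg _)
      (fun k => mul_nonneg (by positivity) (hφ_nonneg _ (by omega))) fun k => ?_
    simpa only [mul_sub, add_right_comm _ 1 l] using hstep (k + l) (by omega)
  have hcauchy : CauchySeq z :=
    cauchySeq_of_dist_le_of_summable a (fun k => (dist_comm _ _).trans_le (dist_eq_norm _ _).le)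
      hsumm
  exact ⟨hsumm, hcauchy, cauchySeq_tendsto_of_complete hcauchy⟩

/-- Global convergence under the Kurdyka–Łojasiewicz property:
sufficient decrease plus the KŁ/relative-error inequality from some index `l` onwards
imply finite length of the iterate sequence, hence convergence.  The extended bound
`η ∈ (0, +∞]` is modelled as `η : EReal` with `0 < η`, and `[0, η)`, `(0, η)` as the
corresponding sets of reals. -/
theorem stmt_10 {N : ℕ} (z : ℕ → EuclideanSpace ℝ (Fin N))
    (J : EuclideanSpace ℝ (Fin N) → ℝ) (Jstar : ℝ) (c ϱ : ℝ) (hc : 0 < c) (hϱ : 0 < ϱ)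
    (η : EReal) (hη : 0 < η) (l : ℕ)
    (φ φ' : ℝ → ℝ)
    (hφcont : ContinuousOn φ {u : ℝ | 0 ≤ u ∧ (u : EReal) < η})
    (hφ0 : φ 0 = 0)
    (hconc : ConcaveOn ℝ {u : ℝ | 0 ≤ u ∧ (u : EReal) < η} φ)
    (hderiv : ∀ u : ℝ, 0 < u → (u : EReal) < η → HasDerivAt φ (φ' u) u)
    (hφ'cont : ContinuousOn φ' {u : ℝ | 0 < u ∧ (u : EReal) < η})
    (hφ'pos : ∀ u : ℝ, 0 < u → (u : EReal) < η → 0 < φ' u)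
    -- (a) sufficient decrease
    (hdec : ∀ k, J (z (k + 1)) ≤ J (z k) - c * ‖z (k + 1) - z k‖ ^ 2)
    -- (b) KŁ inequality combined with the relative-error bound
    (hkl : ∀ k, l ≤ k →
      0 < J (z k) - Jstar ∧ ((J (z k) - Jstar : ℝ) : EReal) < η ∧
        1 ≤ φ' (J (z k) - Jstar) * (ϱ * ‖z k - z (k - 1)‖)) :
    Summable (fun k => ‖z (k + 1) - z k‖)
    ∧ CauchySeq z
    ∧ ∃ zstar, Filter.Tendsto z Filter.atTop (nhds zstar) :=
  stmt_10_general z J Jstar c ϱ hc hϱ η l φ φ' hφ0 hconc hderiv hφ'pos hdec hkl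
end

section
/- Let (a_k)_{k≥0} be a sequence of nonnegative reals, let (r_k)_{k≥0} be a nonincreasing sequence of reals bounded below by r̲ ∈ ℝ, let c' ≥ 0, and let l ∈ ℕ. Suppose the recursion 2 a_{k+1} ≤ c'(r_k − r_{k+1}) + a_k holds for all k ≥ l. Then ∑_{k=l+1}^{∞} a_k ≤ c'(r_l − r̲) + a_l; in particular ∑_{k=0}^{∞} a_k < +∞. -/
/-- Abstract summation argument for the finite-length property: if
`2 a_{k+1} ≤ c'(r_k − r_{k+1}) + a_k` for all `k ≥ l`, with `(a_k)` nonnegative,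
`(r_k)` nonincreasing and bounded below by `r̲`, then
`∑_{k=l+1}^∞ a_k ≤ c'(r_l − r̲) + a_l`; in particular `∑ a_k < ∞`. -/
theorem stmt_11 (a r : ℕ → ℝ) (rlow c' : ℝ) (l : ℕ)
    (ha : ∀ k, 0 ≤ a k) (hr : Antitone r) (hrlow : ∀ k, rlow ≤ r k)
    (hc' : 0 ≤ c')
    (hrec : ∀ k, l ≤ k → 2 * a (k + 1) ≤ c' * (r k - r (k + 1)) + a k) :
    (∑' k : ℕ, a (k + l + 1)) ≤ c' * (r l - rlow) + a l ∧ Summable a := by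
  have key : ∀ n : ℕ, (∑ i ∈ Finset.range n, a (i + l + 1)) + a (l + n)
      ≤ c' * (r l - r (l + n)) + a l := by
    intro n
    induction n with
    | zero => simp
    | succ n ih =>
      have hrec' := hrec (l + n) (Nat.le_add_right _ _)
      have : (∑ i ∈ Finset.range (n + 1), a (i + l + 1)) + a (l + (n + 1))
          = (∑ i ∈ Finset.range n, a (i + l + 1)) + 2 * a (l + n + 1) := by
        rw [Finset.sum_range_succ]
        have e1 : n + l + 1 = l + n + 1 := by omega
        have e2 : l + (n + 1) = l + n + 1 := by omega
        rw [e1, e2]; ring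
      rw [this]
      have h2 : (∑ i ∈ Finset.range n, a (i + l + 1)) + 2 * a (l + n + 1)
          ≤ (∑ i ∈ Finset.range n, a (i + l + 1)) + (c' * (r (l + n) - r (l + n + 1)) + a (l + n)) := by
        linarith
      calc _ ≤ (∑ i ∈ Finset.range n, a (i + l + 1)) + a (l + n)
              + c' * (r (l + n) - r (l + n + 1)) := by linarith
        _ ≤ c' * (r l - r (l + n)) + a l + c' * (r (l + n) - r (l + n + 1)) := by linarith
        _ = c' * (r l - r (l + (n + 1))) + a l := by
              have : l + (n + 1) = l + n + 1 := by ring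
              rw [this]; ring
  have hbound : ∀ n : ℕ, (∑ i ∈ Finset.range n, a (i + l + 1)) ≤ c' * (r l - rlow) + a l := by
    intro n
    have h1 := key n
    have h2 := ha (l + n)
    have h3 : r l - r (l + n) ≤ r l - rlow := by
      have := hrlow (l + n); linarith
    have h4 : c' * (r l - r (l + n)) ≤ c' * (r l - rlow) := by
      exact mul_le_mul_of_nonneg_left h3 hc'
    linarith
  have hsum : Summable (fun k : ℕ => a (k + l + 1)) := by
    apply summable_of_sum_range_le (fun k => ha _) hbound
  have htsum : (∑' k : ℕ, a (k + l + 1)) ≤ c' * (r l - rlow) + a l :=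
    Summable.tsum_le_of_sum_range_le hsum hbound
  refine ⟨htsum, ?_⟩
  have : Summable (fun k : ℕ => a (k + (l + 1))) := by
    have e : ∀ k : ℕ, k + (l + 1) = k + l + 1 := fun k => by omega
    simpa only [e] using hsum
  exact (summable_nat_add_iff (l + 1)).mp this
end
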